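/- arXiv:1210.6166 — 7 statements merged into one kernel-verified Lean document; each statement's English description precedes it below -/
import Mathlib

section
/- Let G = (A, N, ∂₀, ∂₁) be a directed graph. Define L(G) to have arc set N, node set (N × {0,1})/∼, where ∼ is the equivalence relation generated by (x,1) ∼ (y,0) whenever there exists an arc f with ∂₀(f) = x and ∂₁(f) = y, with source and target maps x ↦ [(x,0)] and x ↦ [(x,1)]. Define R(G) (the line graph) to have node set A, arc set {(f,g) ∈ A × A : ∂₁(f) = ∂₀(g)}, with source (f,g) ↦ f and target (f,g) ↦ g. Then L and R extend to functors on the category of directed graphs and L is left adjoint to R. -/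
open CategoryTheory

/-- A directed network: arcs `A`, nodes `N`, and source/target maps. -/
structure DiGraph where
  A : Type
  N : Type
  s : A → N
  t : A → N

/-- A homomorphism of directed networks. -/
@[ext]
structure DiGraphHom (G H : DiGraph) where
  onA : G.A → H.A
  onN : G.N → H.N
  comm_s : ∀ a, H.s (onA a) = onN (G.s a)
  comm_t : ∀ a, H.t (onA a) = onN (G.t a)

instance : Category DiGraph where
  Hom := DiGraphHom
  id G := ⟨fun a => a, fun x => x, fun _ => rfl, fun _ => rfl⟩
  comp f g := ⟨fun a => g.onA (f.onA a), fun x => g.onN (f.onN x),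
    fun a => by rw [g.comm_s, f.comm_s], fun a => by rw [g.comm_t, f.comm_t]⟩
  id_comp f := rfl
  comp_id f := rfl
  assoc f g h := rfl

/-- The generating relation on `N × {0,1}`: `(x,1) r (y,0)` iff there is an arc from `x` to `y`.
Taking `Quot` of this relation quotients by the equivalence relation it generates. -/
def condenseRel (G : DiGraph) : G.N × Bool → G.N × Bool → Prop :=
  fun p q => p.2 = true ∧ q.2 = false ∧ ∃ f : G.A, G.s f = p.1 ∧ G.t f = q.1

/-- The network transformation `L` on objects: arcs are the nodes of `G`, nodes are
`(N × {0,1})/∼`, source `x ↦ [(x,0)]`, target `x ↦ [(x,1)]`. -/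
def condense (G : DiGraph) : DiGraph where
  A := G.N
  N := Quot (condenseRel G)
  s := fun x => Quot.mk _ (x, false)
  t := fun x => Quot.mk _ (x, true)

/-- The network transformation `R` on objects: the line graph of `G`. -/
def lineGraph (G : DiGraph) : DiGraph where
  A := { p : G.A × G.A // G.t p.1 = G.s p.2 }
  N := G.A
  s := fun p => p.1.1
  t := fun p => p.1.2

/-!
A homomorphism `ψ : condense G ⟶ H` is determined by its arc map, which sends each node `x` of
`G` to an arc `ψ x` of `H`; the identifications defining the nodes of `condense G` say exactly
that the head of `ψ x` is the tail of `ψ y` whenever `G` has an arc `x → y`. Such an assignment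
is the same thing as a homomorphism `G ⟶ lineGraph H` with node map `ψ`, whose arc map
`a ↦ (ψ (s a), ψ (t a))` is in turn forced. Naturality is then automatic, since a homomorphism
out of `condense G` is determined by its arc map and one into `lineGraph H` by its node map.
-/

variable {G H : DiGraph}

theorem condense_t_eq_s (a : G.A) : (condense G).t (G.s a) = (condense G).s (G.t a) :=
  Quot.sound ⟨rfl, rfl, a, rfl, rfl⟩

theorem condense_hom_t_eq_s (ψ : condense G ⟶ H) (a : G.A) :
    H.t (ψ.onA (G.s a)) = H.s (ψ.onA (G.t a)) :=
  (ψ.comm_t _).trans ((congrArg ψ.onN (condense_t_eq_s a)).trans (ψ.comm_s _).symm)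

theorem condense_hom_ext {ψ ψ' : condense G ⟶ H} (h : ψ.onA = ψ'.onA) : ψ = ψ' := by
  refine DiGraphHom.ext h (funext fun q => ?_)
  induction q using Quot.ind with | _ p => ?_
  obtain ⟨x, _ | _⟩ := p
  · calc ψ.onN ((condense G).s x) = H.s (ψ.onA x) := (ψ.comm_s x).symm
      _ = H.s (ψ'.onA x) := congrArg H.s (congrFun h x)
      _ = ψ'.onN ((condense G).s x) := ψ'.comm_s x
  · calc ψ.onN ((condense G).t x) = H.t (ψ.onA x) := (ψ.comm_t x).symm
      _ = H.t (ψ'.onA x) := congrArg H.t (congrFun h x)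
      _ = ψ'.onN ((condense G).t x) := ψ'.comm_t x

theorem lineGraph_hom_onA_fst (φ : G ⟶ lineGraph H) (a : G.A) :
    (φ.onA a).1.1 = φ.onN (G.s a) :=
  φ.comm_s a

theorem lineGraph_hom_onA_snd (φ : G ⟶ lineGraph H) (a : G.A) :
    (φ.onA a).1.2 = φ.onN (G.t a) :=
  φ.comm_t a

theorem lineGraph_hom_t_eq_s (φ : G ⟶ lineGraph H) (a : G.A) :
    H.t (φ.onN (G.s a)) = H.s (φ.onN (G.t a)) := by
  rw [← lineGraph_hom_onA_fst, ← lineGraph_hom_onA_snd]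
  exact (φ.onA a).2

theorem lineGraph_hom_ext {φ φ' : G ⟶ lineGraph H} (h : φ.onN = φ'.onN) : φ = φ' := by
  refine DiGraphHom.ext (funext fun a => Subtype.ext (Prod.ext ?_ ?_)) h
  · rw [lineGraph_hom_onA_fst, lineGraph_hom_onA_fst, h]
  · rw [lineGraph_hom_onA_snd, lineGraph_hom_onA_snd, h]

def condenseMap (φ : G ⟶ H) : condense G ⟶ condense H where
  onA := φ.onN
  onN := Quot.map (Prod.map φ.onN id) (by
    rintro ⟨_, _⟩ ⟨_, _⟩ ⟨hx, hy, f, rfl, rfl⟩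
    exact ⟨hx, hy, φ.onA f, φ.comm_s f, φ.comm_t f⟩)
  comm_s _ := rfl
  comm_t _ := rfl

def condenseFunctor : DiGraph ⥤ DiGraph where
  obj := condense
  map := condenseMap
  map_id _ := condense_hom_ext rfl
  map_comp _ _ := condense_hom_ext rfl

def lineGraphMap (φ : G ⟶ H) : lineGraph G ⟶ lineGraph H where
  onA p := ⟨(φ.onA p.1.1, φ.onA p.1.2), by rw [φ.comm_t, φ.comm_s, p.2]⟩
  onN := φ.onA
  comm_s _ := rfl
  comm_t _ := rfl

def lineGraphFunctor : DiGraph ⥤ DiGraph where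
  obj := lineGraph
  map := lineGraphMap
  map_id _ := rfl
  map_comp _ _ := rfl

def condenseHomEquiv (G H : DiGraph) : (condense G ⟶ H) ≃ (G ⟶ lineGraph H) where
  toFun ψ :=
    { onA a := ⟨(ψ.onA (G.s a), ψ.onA (G.t a)), condense_hom_t_eq_s ψ a⟩
      onN := ψ.onA
      comm_s _ := rfl
      comm_t _ := rfl }
  invFun φ :=
    { onA := φ.onN
      onN := Quot.lift (fun p => bif p.2 then H.t (φ.onN p.1) else H.s (φ.onN p.1)) (by
        rintro ⟨_, _⟩ ⟨_, _⟩ ⟨rfl, rfl, a, rfl, rfl⟩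
        exact lineGraph_hom_t_eq_s φ a)
      comm_s _ := rfl
      comm_t _ := rfl }
  left_inv _ := condense_hom_ext rfl
  right_inv _ := lineGraph_hom_ext rfl

def condenseLineGraphAdjunction : condenseFunctor ⊣ lineGraphFunctor :=
  Adjunction.mkOfHomEquiv
    { homEquiv := condenseHomEquiv
      homEquiv_naturality_left_symm := fun _ _ => condense_hom_ext rfl
      homEquiv_naturality_right := fun _ _ => rfl }

/-- The constructions `L` (condensation) and `R` (line graph) extend to
endofunctors on the category of directed networks, and `L` is left adjoint to `R`. -/
theorem statement3 :
    ∃ (L R : DiGraph ⥤ DiGraph),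
      (∀ G : DiGraph, L.obj G = condense G) ∧
      (∀ G : DiGraph, R.obj G = lineGraph G) ∧
      Nonempty (L ⊣ R) :=
  ⟨condenseFunctor, lineGraphFunctor, fun _ => rfl, fun _ => rfl,
    ⟨condenseLineGraphAdjunction⟩⟩
end

section
/- Let C be a small category, G a presheaf on C, and define the category IT_G whose objects are pairs (H, φ) of a covariant functor H : C → Set together with a family of maps φ_c : G(c) → H(c) satisfying H(f) ∘ φ_{c'} ∘ G(f) = φ_c for every morphism f : c' → c, and whose morphisms (H, φ) → (H', φ') are natural transformations n : H → H' with n ∘ φ = φ'. Then for a directed graph G (a presheaf on ↑↑), the category IT_G has an initial object. -/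
/-! The initial object is the free one, and it exists over any small category `C`: take for
`H(c)` the formal expressions `H(g) (φ_d x)` with `x ∈ G(d)` and `g : d ⟶ c`, subject to the
relations forced by the dinaturality of `φ`, namely `H(g) (φ_d x) = H(f ≫ g) (φ_{d'} (G(f) x))`
for `f : d' ⟶ d`. A morphism out of it is determined by where it sends the `φ_d x`. -/

open CategoryTheory Limits Opposite

variable {C : Type} [SmallCategory C]

/-- An object of the category `IT_G`: a covariant functor `H : C ⥤ Type` together with a family
of maps `φ_c : G(c) → H(c)` which is natural from the contravariant functor `G` to the covariant
functor `H`: for every `f : c' ⟶ c`, `H(f) ∘ φ_{c'} ∘ G(f) = φ_c`. -/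
structure ITObj (G : Cᵒᵖ ⥤ Type) where
  H : C ⥤ Type
  φ : ∀ c : C, G.obj (op c) → H.obj c
  nat : ∀ {c' c : C} (f : c' ⟶ c) (x : G.obj (op c)),
    H.map f (φ c' (G.map f.op x)) = φ c x

/-- A morphism of `IT_G`: a natural transformation `n : H ⟶ H'` with `n ∘ φ = φ'`. -/
@[ext]
structure ITHom {G : Cᵒᵖ ⥤ Type} (X Y : ITObj G) where
  n : X.H ⟶ Y.H
  comm : ∀ (c : C) (x : G.obj (op c)), n.app c (X.φ c x) = Y.φ c x

/-- The category `IT_G`. -/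
instance (G : Cᵒᵖ ⥤ Type) : Category (ITObj G) where
  Hom := ITHom
  id X := ⟨𝟙 X.H, fun c x => rfl⟩
  comp f g := ⟨f.n ≫ g.n, fun c x => by
    simp only [NatTrans.comp_app, types_comp_apply, f.comm, g.comm]⟩
  id_comp f := by apply ITHom.ext; simp
  comp_id f := by apply ITHom.ext; simp
  assoc f g h := by apply ITHom.ext; simp

namespace ITObj

variable (G : Cᵒᵖ ⥤ Type)

/-- `⟨d, x, g⟩` stands for the element `H(g) (φ_d x)` of `H(c)`. -/
abbrev FreeGen (c : C) : Type := Σ d : C, G.obj (op d) × (d ⟶ c)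

inductive FreeRel (c : C) : FreeGen G c → FreeGen G c → Prop
  | mk {d d' : C} (f : d' ⟶ d) (x : G.obj (op d)) (g : d ⟶ c) :
      FreeRel c ⟨d, x, g⟩ ⟨d', G.map f.op x, f ≫ g⟩

def freeFunctor : C ⥤ Type where
  obj c := Quot (FreeRel G c)
  map h := TypeCat.ofHom <| Quot.map (fun p => ⟨p.1, p.2.1, p.2.2 ≫ h⟩) <| by
    rintro _ _ ⟨f, x, g⟩
    simpa using FreeRel.mk f x (g ≫ h)
  map_id c := by
    ext ⟨d, x, g⟩
    change Quot.mk _ (⟨d, x, g ≫ 𝟙 c⟩ : FreeGen G c) = Quot.mk _ ⟨d, x, g⟩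
    rw [Category.comp_id]
  map_comp h h' := by
    ext ⟨d, x, g⟩
    change Quot.mk _ (⟨d, x, g ≫ h ≫ h'⟩ : FreeGen G _) = Quot.mk _ ⟨d, x, (g ≫ h) ≫ h'⟩
    rw [Category.assoc]

lemma freeFunctor_mk_eq_mk {c d d' : C} (f : d' ⟶ d) (x : G.obj (op d)) (g : d ⟶ c) {g' : d' ⟶ c}
    (hg' : f ≫ g = g') :
    (Quot.mk _ ⟨d', G.map f.op x, g'⟩ : (freeFunctor G).obj c) = Quot.mk _ ⟨d, x, g⟩ :=
  hg' ▸ (Quot.sound (FreeRel.mk f x g)).symm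

def free : ITObj G where
  H := freeFunctor G
  φ c x := Quot.mk _ ⟨c, x, 𝟙 c⟩
  nat f x := freeFunctor_mk_eq_mk G f x (𝟙 _) (by simp)

def fromFree (Y : ITObj G) : free G ⟶ Y where
  n :=
    { app c := TypeCat.ofHom <| Quot.lift (fun p => Y.H.map p.2.2 (Y.φ p.1 p.2.1)) <| by
        rintro _ _ ⟨f, x, g⟩
        simp only [Functor.map_comp_apply, Y.nat]
      naturality c c' h := by
        ext ⟨d, x, g⟩
        exact Functor.map_comp_apply _ _ _ _ }
  comm c x := Y.H.map_id_apply c (Y.φ c x)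

theorem eq_fromFree (Y : ITObj G) (m : free G ⟶ Y) : m = fromFree G Y := by
  apply ITHom.ext
  ext c ⟨d, x, g⟩
  have hgen : (Quot.mk _ ⟨d, x, g⟩ : (free G).H.obj c) = (free G).H.map g ((free G).φ d x) := by
    change _ = Quot.mk _ (⟨d, x, 𝟙 d ≫ g⟩ : FreeGen G c)
    rw [Category.id_comp]
  calc m.n.app c (Quot.mk _ ⟨d, x, g⟩)
      = Y.H.map g (m.n.app d ((free G).φ d x)) := by rw [hgen, NatTrans.naturality_apply]
    _ = Y.H.map g (Y.φ d x) := by rw [m.comm]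

def isInitialFree : IsInitial (free G) :=
  IsInitial.ofUniqueHom (fromFree G) (eq_fromFree G)

end ITObj

/-- For any directed graph `G` (a presheaf on the walking parallel pair `↑↑`),
the category `IT_G` has an initial object. -/
theorem statement6 (G : WalkingParallelPairᵒᵖ ⥤ Type) :
    HasInitial (ITObj G) :=
  (ITObj.isInitialFree G).hasInitial
end

section
/- Let G be a directed graph. The object of IT_G given by H(0) = G(0), H(1) = (G(0) × {p₀,p₁} + G(1) × {q₀,q₁,q₂})/∼ (the node set of G ⊗ M₀), with structure maps induced by the standard representation M₀, together with the interface transformation φ^{M₀,G}, is an initial object of IT_G. In particular, for every object (H, ψ) of IT_G there is a unique map ι₁ : G⊗M₀(0) → H(1) satisfying ι₁([(x, p_{i+1})]) = H(mᵢ)(ψ₀(x)) for i = 0,1 and all x ∈ G(0), and ψ₁ = ι₁ ∘ φ₁^{M₀,G}. -/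
open CategoryTheory Limits Opposite

section M0

variable (G : WalkingParallelPairᵒᵖ ⥤ Type)

/-- Arcs of the directed graph `G`. -/
abbrev arcs : Type := G.obj (op WalkingParallelPair.one)

/-- Nodes of the directed graph `G`. -/
abbrev nodes : Type := G.obj (op WalkingParallelPair.zero)

/-- The source map of `G`. -/
abbrev srcMap : arcs G → nodes G := G.map (Quiver.Hom.op WalkingParallelPairHom.left)

/-- The target map of `G`. -/
abbrev tgtMap : arcs G → nodes G := G.map (Quiver.Hom.op WalkingParallelPairHom.right)

/-- The generating relation whose quotient is the node set `G ⊗ M₀(0)` of `L(G)`: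
`(x,p₁) ∼ (y,p₀)` whenever there is an arc from `x` to `y` (`true` codes `p₁`). -/
def lrel : nodes G × Bool → nodes G × Bool → Prop :=
  fun p q => p.2 = true ∧ q.2 = false ∧ ∃ f : arcs G, srcMap G f = p.1 ∧ tgtMap G f = q.1

/-- The node set of `G ⊗ M₀`, i.e. `(G(0) × {p₀,p₁} + G(1) × {q₀,q₁,q₂})/∼`. -/
def LN : Type := Quot (lrel G)

/-- The object of `IT_G` induced by the standard representation `M₀` and the interface
transformation `φ^{M₀,G}`: `H(0) = G(0)`, `H(1) = G ⊗ M₀(0)`, `H(m₀) : x ↦ [(x,p₁)]`,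
`H(m₁) : x ↦ [(x,p₀)]`, `φ₀ = id`, `φ₁ : f ↦ [(∂₀ f, p₁)] = [(f, q₁)]`. -/
def M0Obj : ITObj G where
  H := parallelPair (TypeCat.ofHom (fun x : nodes G => (Quot.mk (lrel G) (x, true) : LN G)))
    (TypeCat.ofHom (fun x : nodes G => Quot.mk (lrel G) (x, false)))
  φ := fun c => match c with
    | WalkingParallelPair.zero => fun x => x
    | WalkingParallelPair.one => fun f => Quot.mk (lrel G) (srcMap G f, true)
  nat := by
    intro c' c f x
    cases f using WalkingParallelPairHom.casesOn with
    | id =>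
      rw [show WalkingParallelPairHom.id c' = 𝟙 c' from rfl,
        show Quiver.Hom.op (𝟙 c') = 𝟙 (op c') from rfl,
        CategoryTheory.Functor.map_id, CategoryTheory.Functor.map_id]
      rfl
    | left => exact rfl
    | right =>
      refine Eq.symm (Quot.sound ?_)
      exact ⟨rfl, rfl, x, rfl, rfl⟩

end M0

/-!
A morphism out of `M0Obj G` is forced: in degree `0` it must be `ψ₀` because `φ₀ = id`, and in
degree `1` naturality forces `[(x, p₁)] ↦ H(m₀)(ψ₀ x)` and `[(x, p₀)] ↦ H(m₁)(ψ₀ x)`, since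
these classes exhaust `G ⊗ M₀(0)`. This assignment respects the relation because, for an arc
`a : x → y`, both `H(m₀)(ψ₀ x)` and `H(m₁)(ψ₀ y)` equal `ψ₁ a` by the dinaturality of `ψ`.
-/

section Initial

variable {G : WalkingParallelPairᵒᵖ ⥤ Type} (Y : ITObj G)

def iota1 : LN G → Y.H.obj WalkingParallelPair.one :=
  Quot.lift
    (fun p => if p.2 then
        Y.H.map WalkingParallelPairHom.left (Y.φ WalkingParallelPair.zero p.1)
      else
        Y.H.map WalkingParallelPairHom.right (Y.φ WalkingParallelPair.zero p.1))
    (by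
      rintro ⟨_, _⟩ ⟨_, _⟩ ⟨rfl, rfl, a, rfl, rfl⟩
      exact (Y.nat WalkingParallelPairHom.left a).trans (Y.nat WalkingParallelPairHom.right a).symm)

theorem iota1_mk_true (x : nodes G) :
    iota1 Y (Quot.mk (lrel G) (x, true)) =
      Y.H.map WalkingParallelPairHom.left (Y.φ WalkingParallelPair.zero x) := rfl

theorem iota1_mk_false (x : nodes G) :
    iota1 Y (Quot.mk (lrel G) (x, false)) =
      Y.H.map WalkingParallelPairHom.right (Y.φ WalkingParallelPair.zero x) := rfl

theorem φ_one_eq_iota1 (a : arcs G) :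
    Y.φ WalkingParallelPair.one a = iota1 Y (Quot.mk (lrel G) (srcMap G a, true)) :=
  (Y.nat WalkingParallelPairHom.left a).symm

theorem eq_iota1 {ι : LN G → Y.H.obj WalkingParallelPair.one}
    (h : ∀ x : nodes G,
      ι (Quot.mk (lrel G) (x, true)) =
          Y.H.map WalkingParallelPairHom.left (Y.φ WalkingParallelPair.zero x) ∧
        ι (Quot.mk (lrel G) (x, false)) =
          Y.H.map WalkingParallelPairHom.right (Y.φ WalkingParallelPair.zero x)) :
    ι = iota1 Y := by
  funext z
  induction z using Quot.ind with
  | mk p =>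
    obtain ⟨x, _ | _⟩ := p
    · exact (h x).2
    · exact (h x).1

def m0Hom : M0Obj G ⟶ Y where
  n :=
    { app := fun c => match c with
        | WalkingParallelPair.zero => TypeCat.ofHom (Y.φ WalkingParallelPair.zero)
        | WalkingParallelPair.one => TypeCat.ofHom (iota1 Y)
      naturality := by
        intro c c' f
        cases f using WalkingParallelPairHom.casesOn with
        | id => rw [show WalkingParallelPairHom.id c = 𝟙 c from rfl]; simp
        | left => rfl
        | right => rfl }
  comm := by
    rintro (_ | _) x
    · rfl
    · exact (φ_one_eq_iota1 Y x).symm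

variable {Y}

theorem ITHom.app_zero (m : M0Obj G ⟶ Y) (x : nodes G) :
    m.n.app WalkingParallelPair.zero x = Y.φ WalkingParallelPair.zero x :=
  m.comm WalkingParallelPair.zero x

theorem ITHom.app_one_eq_iota1 (m : M0Obj G ⟶ Y) :
    ⇑(m.n.app WalkingParallelPair.one) = iota1 Y := by
  refine eq_iota1 Y fun x => ⟨?_, ?_⟩
  · rw [← ITHom.app_zero m]
    exact ConcreteCategory.congr_hom (m.n.naturality WalkingParallelPairHom.left) x
  · rw [← ITHom.app_zero m]
    exact ConcreteCategory.congr_hom (m.n.naturality WalkingParallelPairHom.right) x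

theorem ITHom.eq_m0Hom (m : M0Obj G ⟶ Y) : m = m0Hom Y := by
  apply ITHom.ext
  ext c x
  cases c with
  | zero => exact ITHom.app_zero m x
  | one => exact congrFun (ITHom.app_one_eq_iota1 m) x

end Initial

def isInitialM0Obj (G : WalkingParallelPairᵒᵖ ⥤ Type) : IsInitial (M0Obj G) :=
  IsInitial.ofUniqueHom m0Hom fun _ => ITHom.eq_m0Hom

/-- The object of `IT_G` built from the standard representation `M₀`
(with `H(1)` the node set of `G ⊗ M₀`) together with the interface transformation `φ^{M₀,G}`
is initial in `IT_G`.  In particular, for every object `(H, ψ)` of `IT_G` there is a unique map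
`ι₁ : G ⊗ M₀(0) → H(1)` with `ι₁([(x,p₁)]) = H(m₀)(ψ₀(x))`, `ι₁([(x,p₀)]) = H(m₁)(ψ₀(x))`
for all nodes `x`, and `ψ₁ = ι₁ ∘ φ₁^{M₀,G}`. -/
theorem statement7 (G : WalkingParallelPairᵒᵖ ⥤ Type) :
    Nonempty (IsInitial (M0Obj G)) ∧
    ∀ Y : ITObj G, ∃! ι₁ : LN G → Y.H.obj WalkingParallelPair.one,
      (∀ x : nodes G,
        ι₁ (Quot.mk (lrel G) (x, true)) =
          Y.H.map WalkingParallelPairHom.left (Y.φ WalkingParallelPair.zero x) ∧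
        ι₁ (Quot.mk (lrel G) (x, false)) =
          Y.H.map WalkingParallelPairHom.right (Y.φ WalkingParallelPair.zero x)) ∧
      (∀ a : arcs G,
        Y.φ WalkingParallelPair.one a = ι₁ (Quot.mk (lrel G) (srcMap G a, true))) :=
  ⟨⟨isInitialM0Obj G⟩, fun Y =>
    ⟨iota1 Y, ⟨fun x => ⟨iota1_mk_true Y x, iota1_mk_false Y x⟩, φ_one_eq_iota1 Y⟩,
      fun _ h => eq_iota1 Y h.1⟩⟩
end

section
/- Let y : ↑↑ → Ĉ(↑↑) be the Yoneda embedding regarded as a representation. For any directed graph G, the 0-component φ₀^{y,G} of the interface transformation is a bijection, and the 1-component φ₁^{y,G} is a map into a one-element set (since Int_y(1) is the empty presheaf, which is initial); hence the induced equivalence relation ∼_y on the arc set G(1) is the total relation G(1) × G(1). -/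
open CategoryTheory Limits Opposite WalkingParallelPair WalkingParallelPairHom

universe v w

section Machinery

variable {C : Type} [SmallCategory C] {D : Type w} [Category.{v} D]

/-- The diagram `Elts(G) → C → D` whose colimit is `G ⊗ M`. -/
def elemDiagram (M : C ⥤ D) (G : Cᵒᵖ ⥤ Type) : G.Elementsᵒᵖ ⥤ D :=
  (CategoryOfElements.π G).leftOp ⋙ M

/-- `G ⊗ M`, the left Kan extension of `M` along Yoneda evaluated at `G`, computed as the
colimit of `M` over the category of elements of `G`. -/
noncomputable def tensorObj (M : C ⥤ D) (G : Cᵒᵖ ⥤ Type)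
    [HasColimitsOfShape G.Elementsᵒᵖ D] : D :=
  colimit (elemDiagram M G)

/-- The colimit injection `μ^{M,G}_{(c,x)} : M(c) ⟶ G ⊗ M`. -/
noncomputable def tensorι (M : C ⥤ D) (G : Cᵒᵖ ⥤ Type)
    [HasColimitsOfShape G.Elementsᵒᵖ D] (c : C) (x : G.obj (op c)) :
    M.obj c ⟶ tensorObj M G :=
  colimit.ι (elemDiagram M G) (op ⟨op c, x⟩)

/-- The diagram `Elts(y(c)) ≅ Over c → C → D` whose limit is the interface `Int_M(c)`. -/
def overDiagram (M : C ⥤ D) (c : C) : Over c ⥤ D :=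
  Over.forget c ⋙ M

/-- The interface `Int_M(c)` of a representation `M` at `c`. -/
noncomputable def interfaceObj (M : C ⥤ D) [∀ c : C, HasLimitsOfShape (Over c) D] (c : C) : D :=
  limit (overDiagram M c)

/-- The limit projection `ν^{M,c}_{(c',f)} : Int_M(c) ⟶ M(c')`. -/
noncomputable def interfaceπ (M : C ⥤ D) [∀ c : C, HasLimitsOfShape (Over c) D]
    {c' c : C} (f : c' ⟶ c) : interfaceObj M c ⟶ M.obj c' :=
  limit.π (overDiagram M c) (Over.mk f)

/-- The interface transformation `φ^{M,G}_c : G(c) → Hom_D(Int_M(c), G ⊗ M)`,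
`x ↦ μ^{M,G}_{(c,x)} ∘ ν^{M,c}_{(c,id_c)}`. -/
noncomputable def interfaceTrans (M : C ⥤ D) (G : Cᵒᵖ ⥤ Type)
    [HasColimitsOfShape G.Elementsᵒᵖ D] [∀ c : C, HasLimitsOfShape (Over c) D]
    (c : C) (x : G.obj (op c)) : interfaceObj M c ⟶ tensorObj M G :=
  interfaceπ M (𝟙 c) ≫ tensorι M G c x

end Machinery

/-!
Every arrow into `0` is an identity, so `(0, 𝟙)` is initial in `Over 0` and `Int_y(0) ≅ y(0)`;
by density of representables `G ⊗ y ≅ G`, under which `μ_{(0,x)}` becomes the Yoneda arrow of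
`x`. Hence `φ₀` is a composite of bijections. A point of `Int_y(1)` at `d` yields `a, b : d ⟶ 0`
with `a ≫ s = b ≫ t`; as `𝟙₀` is the only arrow into `0`, this would force `s = t`. So `Int_y(1)`
is the empty presheaf, which is initial, and all components `φ₁(x)` coincide.
-/

section Interface

variable {C : Type} [SmallCategory C]

noncomputable def Over.isInitialMkIdOfIsIso {c : C} (h : ∀ {c' : C} (f : c' ⟶ c), IsIso f) :
    IsInitial (Over.mk (𝟙 c)) :=
  IsInitial.ofUniqueHom (fun Y => Over.homMk (inv Y.hom)) fun Y m => by
    ext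
    simpa using IsIso.eq_inv_of_inv_hom_id (Over.w m)

lemma isIso_interfaceπ_id_of_isInitial {D : Type*} [Category D]
    [∀ c : C, HasLimitsOfShape (Over c) D] (M : C ⥤ D) {c : C}
    (h : IsInitial (Over.mk (𝟙 c))) : IsIso (interfaceπ M (𝟙 c)) :=
  isIso_π_of_isInitial h _

lemma interfaceπ_yoneda_app_comp {c' c : C} (f : c' ⟶ c) {X : Cᵒᵖ}
    (t : (interfaceObj yoneda c).obj X) :
    (interfaceπ yoneda f).app X t ≫ f = (interfaceπ yoneda (𝟙 c)).app X t := by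
  have w := limit.w (overDiagram yoneda c) (Over.homMk f : Over.mk f ⟶ Over.mk (𝟙 c))
  exact congr($(w).app X t)

end Interface

section TensorYoneda

variable {C : Type} [SmallCategory C] (G : Cᵒᵖ ⥤ Type)

noncomputable def functorToRepresentablesIsoElemDiagram :
    Presheaf.functorToRepresentables.{0} G ≅ elemDiagram yoneda G :=
  NatIso.ofComponents fun _ => NatIso.ofComponents fun _ => Equiv.ulift.toIso

noncomputable def tensorObjYonedaIso : tensorObj yoneda G ≅ G :=
  colimit.isoColimitCocone ⟨_, (IsColimit.precomposeInvEquiv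
    (functorToRepresentablesIsoElemDiagram G) _).symm (Presheaf.colimitOfRepresentable G)⟩

lemma tensorι_yoneda_comp_tensorObjYonedaIso_hom (c : C) (x : G.obj (op c)) :
    tensorι yoneda G c x ≫ (tensorObjYonedaIso G).hom = yonedaEquiv.symm x :=
  colimit.isoColimitCocone_ι_hom _ (op (G.elementsMk (op c) x))

lemma bijective_tensorι_yoneda (c : C) : Function.Bijective (tensorι yoneda G c) := by
  have hcomp : (· ≫ (tensorObjYonedaIso G).hom) ∘ tensorι yoneda G c = yonedaEquiv.symm :=
    funext (tensorι_yoneda_comp_tensorObjYonedaIso_hom G c)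
  have hpost := (isIso_iff_yoneda_map_bijective (tensorObjYonedaIso G).hom).1 inferInstance
  exact (Function.Bijective.of_comp_iff' (hpost _) _).1 (hcomp ▸ yonedaEquiv.symm.bijective)

end TensorYoneda

section ParallelPair

lemma WalkingParallelPair.isIso_of_hom_zero {c : WalkingParallelPair} (f : c ⟶ zero) : IsIso f := by
  change WalkingParallelPairHom c zero at f
  cases f
  exact inferInstanceAs (IsIso (𝟙 zero))

lemma isEmpty_interfaceObj_yoneda_one (X : WalkingParallelPairᵒᵖ) :
    IsEmpty ((interfaceObj (yoneda (C := WalkingParallelPair)) one).obj X) := by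
  refine ⟨fun t => ?_⟩
  have hleft := interfaceπ_yoneda_app_comp left t
  have hright := interfaceπ_yoneda_app_comp right t
  obtain ⟨d⟩ := X
  generalize (interfaceπ yoneda left).app (op d) t = a at hleft
  generalize (interfaceπ yoneda right).app (op d) t = b at hright
  cases a
  cases b
  have : (left : zero ⟶ one) = right := by simpa using hleft.trans hright.symm
  cases this

end ParallelPair

/-- For the Yoneda embedding regarded as a representation of `↑↑` and any
directed graph `G`: the 0-component of the interface transformation `φ^{y,G}` is a bijection;
the 1-component lands in a one-element set (`Int_y(1)` being the empty presheaf, which is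
initial); hence the induced equivalence relation on arcs is the total relation. -/
theorem statement10 (G : WalkingParallelPairᵒᵖ ⥤ Type) :
    Function.Bijective (fun x : G.obj (op zero) =>
      interfaceTrans yoneda G zero x) ∧
    Subsingleton (interfaceObj (yoneda (C := WalkingParallelPair)) one ⟶ tensorObj yoneda G) ∧
    ∀ x y : G.obj (op one), interfaceTrans yoneda G one x = interfaceTrans yoneda G one y := by
  have hsub : Subsingleton
      (interfaceObj (yoneda (C := WalkingParallelPair)) one ⟶ tensorObj yoneda G) :=
    ⟨fun f g => by ext X t; exact (isEmpty_interfaceObj_yoneda_one X).elim t⟩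
  refine ⟨?_, hsub, fun x y => Subsingleton.elim _ _⟩
  have hπ := isIso_interfaceπ_id_of_isInitial yoneda
    (Over.isInitialMkIdOfIsIso WalkingParallelPair.isIso_of_hom_zero)
  exact ((isIso_iff_coyoneda_map_bijective _).1 hπ _).comp (bijective_tensorι_yoneda G zero)
end

section
/- Let M : ↑↑ → Ĉ(↑↑) be a representation of the category ↑↑ (freely generated by two parallel arrows m₀, m₁ : 0 → 1) satisfying the gluing condition: the pullback square defining Int_M(1) (pullback of M(m₀), M(m₁) : M(0) → M(1)) is also a pushout. Then for any representation N : ↑↑ → D into a bicomplete category D, the tensor product representation M ⊗ N := (Lan_y N) ∘ M also satisfies the gluing condition. -/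
/-!
`Lan_y N` is a left Kan extension along the Yoneda embedding, hence cocontinuous, so it carries
the pushout square of `M` to a pushout square over the cospan `(M ⊗ N)(m₀), (M ⊗ N)(m₁)`. The
pullback of that cospan receives a comparison map from the image of `Int_M(1)`, and a commuting
square through which a pushout square with the same cospan factors is again a pushout square.

A Yoneda extension is a left adjoint, hence cocontinuous, on presheaves valued in a universe
containing the hom-sets of `D`; presheaves in `Type 0` are lifted there, which does not change
`Lan_y N`.
-/

open CategoryTheory Limits Opposite WalkingParallelPair WalkingParallelPairHom

universe v w

/-- The gluing condition for a representation `M : ↑↑ ⥤ D`: the pullback square defining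
`Int_M(1)` (the pullback of `M(m₀), M(m₁) : M(0) → M(1)`) is also a pushout square. -/
def GluingCondition {D : Type w} [Category.{v} D] (M : WalkingParallelPair ⥤ D) : Prop :=
  ∃ (P : D) (a b : P ⟶ M.obj zero) (w : a ≫ M.map left = b ≫ M.map right),
    Nonempty (IsLimit (PullbackCone.mk a b w)) ∧
    Nonempty (IsColimit (PushoutCocone.mk (M.map left) (M.map right) w))

universe v₁ u₁ v₂ u₂

namespace CategoryTheory

namespace Limits.PushoutCocone

noncomputable def isColimitOfFactorThrough {D : Type u₂} [Category.{v₂} D] {P P' X Y : D}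
    {a b : P ⟶ X} {a' b' : P' ⟶ X} {l r : X ⟶ Y}
    (w : a ≫ l = b ≫ r) (w' : a' ≫ l = b' ≫ r)
    (φ : P ⟶ P') (ha : φ ≫ a' = a) (hb : φ ≫ b' = b)
    (h : IsColimit (PushoutCocone.mk l r w)) :
    IsColimit (PushoutCocone.mk l r w') :=
  PushoutCocone.IsColimit.mk w'
    (fun s => IsColimit.desc h s.inl s.inr (by
      rw [← ha, ← hb, Category.assoc, Category.assoc, s.condition]))
    (fun s => IsColimit.inl_desc h _ _ _)
    (fun s => IsColimit.inr_desc h _ _ _)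
    (fun s m hm₁ hm₂ => IsColimit.hom_ext h
      (hm₁.trans (IsColimit.inl_desc h _ _ _).symm)
      (hm₂.trans (IsColimit.inr_desc h _ _ _).symm))

end Limits.PushoutCocone

namespace Presheaf

variable {C : Type u₁} [Category.{v₁} C] {D : Type u₂} [Category.{v₂} D] (N : C ⥤ D)

abbrev uliftPresheaf : (Cᵒᵖ ⥤ Type v₁) ⥤ (Cᵒᵖ ⥤ Type (max v₂ v₁)) :=
  (Functor.whiskeringRight _ _ _).obj uliftFunctor.{v₂}

variable [uliftYoneda.{v₂}.HasPointwiseLeftKanExtension N]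

/-- Since `uliftYoneda = yoneda ⋙ uliftPresheaf` and `uliftPresheaf` is fully faithful, the
indexing categories of the two pointwise colimits are equivalent. -/
noncomputable def isPointwiseLeftKanExtensionULiftPresheafComp :
    (Functor.LeftExtension.mk (uliftPresheaf ⋙ uliftYoneda.{v₂}.leftKanExtension N)
      (uliftYoneda.{v₂}.leftKanExtensionUnit N)).IsPointwiseLeftKanExtension := fun P => by
  have h := Functor.isPointwiseLeftKanExtensionOfIsLeftKanExtension
    (uliftYoneda.{v₂}.leftKanExtension N) (uliftYoneda.{v₂}.leftKanExtensionUnit N)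
    (uliftPresheaf.obj P)
  let Φ := CostructuredArrow.map₂ (F := 𝟭 C) (G := uliftPresheaf) (S := yoneda) (T := P)
    (U := uliftYoneda.{v₂}) (𝟙 _) (𝟙 _)
  -- instance search does not see through the universe levels of the two identities
  have : Φ.IsEquivalence := by
    refine @CostructuredArrow.isEquivalenceMap₂ _ _ _ _ _ _ _ _ _ _ _ _ _ _ _ _ _ _ _ ?_ ?_ <;>
      exact IsIso.id _
  exact IsColimit.ofIsoColimit (F := CostructuredArrow.proj yoneda P ⋙ N)
    (h.whiskerEquivalence Φ.asEquivalence) (Cocone.ext (Iso.refl _) (fun g => by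
      change (_ ≫ (uliftYoneda.{v₂}.leftKanExtension N).map
        (𝟙 _ ≫ uliftPresheaf.map g.hom ≫ 𝟙 _)) ≫ 𝟙 _ = _
      simp only [Category.id_comp, Category.comp_id]
      rfl))

variable [yoneda.HasLeftKanExtension N]

noncomputable def yonedaLeftKanExtensionIsoULiftPresheafComp :
    yoneda.leftKanExtension N ≅ uliftPresheaf ⋙ uliftYoneda.{v₂}.leftKanExtension N :=
  haveI : (uliftPresheaf ⋙ uliftYoneda.{v₂}.leftKanExtension N).IsLeftKanExtension
      (uliftYoneda.{v₂}.leftKanExtensionUnit N) :=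
    (isPointwiseLeftKanExtensionULiftPresheafComp N).isLeftKanExtension
  Functor.leftKanExtensionUnique _ (yoneda.leftKanExtensionUnit N) _
    (uliftYoneda.{v₂}.leftKanExtensionUnit N)

instance preservesColimitsOfSize_yoneda_leftKanExtension :
    PreservesColimitsOfSize.{v₁, v₁} (yoneda.leftKanExtension N) :=
  haveI := preservesColimitsOfSize_leftKanExtension.{0, v₁, v₂, v₁, u₁, u₂, v₁} N
  preservesColimits_of_natIso (yonedaLeftKanExtensionIsoULiftPresheafComp N).symm

end Presheaf

end CategoryTheory

/-- If a representation `M : ↑↑ ⥤ Ĉ(↑↑)` into the presheaf category on `↑↑`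
satisfies the gluing condition, then for any representation `N : ↑↑ ⥤ D` into a bicomplete
category `D`, the tensor product representation `M ⊗ N = (Lan_y N) ∘ M` also satisfies the
gluing condition. -/
theorem statement14 (M : WalkingParallelPair ⥤ (WalkingParallelPairᵒᵖ ⥤ Type))
    (hM : GluingCondition M)
    {D : Type w} [Category.{v} D] [HasLimits D] [HasColimits D]
    (N : WalkingParallelPair ⥤ D) :
    GluingCondition (M ⋙ yoneda.leftKanExtension N) := by
  obtain ⟨P, a, b, w, -, ⟨hpo⟩⟩ := hM
  let F := yoneda.leftKanExtension N
  -- the Yoneda extension of `N` to presheaves in `Type v` exists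
  have : HasColimitsOfSize.{0, v} D := hasColimitsOfSizeShrink.{0, v} D
  have hFpo := isColimitPushoutCoconeMapOfIsColimit F w hpo
  have hFw : F.map a ≫ F.map (M.map left) = F.map b ≫ F.map (M.map right) := by
    simp only [← F.map_comp, w]
  refine ⟨pullback (F.map (M.map left)) (F.map (M.map right)), pullback.fst _ _,
    pullback.snd _ _, pullback.condition, ⟨pullbackIsPullback _ _⟩, ⟨?_⟩⟩
  exact PushoutCocone.isColimitOfFactorThrough _ _ (pullback.lift _ _ hFw)
    (pullback.lift_fst _ _ _) (pullback.lift_snd _ _ _) hFpo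
end

section
/- Let C be the category freely generated by a finite acyclic directed graph. Then C satisfies: for every span (i, j) (pair of morphisms with common domain), any two maximal spans for (i, j) are equal. (A span (ĩ, j̃) is a maximal span for (i, j) if there is a morphism k with i = ĩ ∘ k, j = j̃ ∘ k, and no non-identity morphism k' and span (i', j') satisfy ĩ = i' ∘ k', j̃ = j' ∘ k'.) -/
open CategoryTheory

universe v u

section Spans

variable {C : Type u} [Category.{v} C]

/-- A span `(i, j)` with apex `d` is maximal if it admits no non-trivial common factorization:
whenever `i = k ≫ i'` and `j = k ≫ j'`, the morphism `k` is an identity (up to `eqToHom`). -/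
def IsMaxSpan {d a b : C} (i : d ⟶ a) (j : d ⟶ b) : Prop :=
  ∀ {d' : C} (k : d ⟶ d') (i' : d' ⟶ a) (j' : d' ⟶ b),
    i = k ≫ i' → j = k ≫ j' → ∃ h : d' = d, k = eqToHom h.symm

/-- `(ĩ, j̃)` is a maximal span for `(i, j)` if it is maximal and `(i, j)` factors through it
by a common morphism. -/
def IsMaxSpanFor {d a b : C} (i : d ⟶ a) (j : d ⟶ b) {e : C} (ti : e ⟶ a) (tj : e ⟶ b) : Prop :=
  IsMaxSpan ti tj ∧ ∃ k : d ⟶ e, i = k ≫ ti ∧ j = k ≫ tj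

end Spans

/-!
Paths factor uniquely: if `p ≫ q = p' ≫ q'` and `p` is no longer than `p'`, then `p'` extends
`p` by a path `m` with `q = m ≫ q'`. Let `(i, j)` factor through the two maximal spans
`(i₁, j₁)` and `(i₂, j₂)` via `k₁` and `k₂`, say with `k₁` the shorter. The extensions `m`
obtained from the `i`- and the `j`-legs agree, since both satisfy `k₂ = k₁ ≫ m` and paths can be
cancelled, so `m` factors `(i₁, j₁)` through `(i₂, j₂)`; maximality makes `m` an identity.
-/

namespace Quiver.Path

variable {V : Type*} [Quiver V]

theorem exists_eq_comp_of_comp_eq_comp {x y y' z : V} (p : Path x y) (q : Path y z)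
    (p' : Path x y') (q' : Path y' z) (h : p.comp q = p'.comp q') (hl : p.length ≤ p'.length) :
    ∃ m : Path y y', p' = p.comp m ∧ q = m.comp q' := by
  induction q generalizing y' with
  | nil =>
    have hq' : q'.length = 0 := by
      have := congrArg length h
      simp only [comp_nil, length_comp] at this
      omega
    obtain rfl := q'.eq_of_length_zero hq'
    obtain rfl := q'.eq_nil_of_length_zero hq'
    exact ⟨nil, by simpa using h.symm, rfl⟩
  | cons q₀ f ih =>
    cases q' with
    | nil => exact ⟨q₀.cons f, h.symm, (comp_nil _).symm⟩
    | cons q₀' f' =>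
      simp only [comp_cons] at h
      obtain rfl := obj_eq_of_cons_eq_cons h
      obtain rfl := eq_of_heq (hom_heq_of_cons_eq_cons h)
      obtain ⟨m, hp', hq₀⟩ := ih p' q₀' (eq_of_heq (heq_of_cons_eq_cons h)) hl
      exact ⟨m, hp', by rw [hq₀, comp_cons]⟩

end Quiver.Path

theorem IsMaxSpan.eq_of_factor {C : Type u} [Category.{v} C] {e₁ e₂ a b : C}
    {i₁ : e₁ ⟶ a} {j₁ : e₁ ⟶ b} {i₂ : e₂ ⟶ a} {j₂ : e₂ ⟶ b} (hmax : IsMaxSpan i₁ j₁) (m : e₁ ⟶ e₂)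
    (hi : i₁ = m ≫ i₂) (hj : j₁ = m ≫ j₂) :
    e₁ = e₂ ∧ HEq i₁ i₂ ∧ HEq j₁ j₂ := by
  obtain ⟨rfl, rfl⟩ := hmax m i₂ j₂ hi hj
  simp only [eqToHom_refl, Category.id_comp] at hi hj
  exact ⟨rfl, heq_of_eq hi, heq_of_eq hj⟩

theorem CategoryTheory.Paths.exists_common_factor_of_comp_eq_comp
    {V : Type u} [Quiver.{v + 1} V] {d a b e₁ e₂ : Paths V}
    {i₁ : e₁ ⟶ a} {j₁ : e₁ ⟶ b} {i₂ : e₂ ⟶ a} {j₂ : e₂ ⟶ b}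
    {k₁ : d ⟶ e₁} {k₂ : d ⟶ e₂} (hi : k₁ ≫ i₁ = k₂ ≫ i₂) (hj : k₁ ≫ j₁ = k₂ ≫ j₂)
    (hl : Quiver.Path.length (V := V) k₁ ≤ Quiver.Path.length (V := V) k₂) :
    ∃ m : e₁ ⟶ e₂, i₁ = m ≫ i₂ ∧ j₁ = m ≫ j₂ := by
  obtain ⟨m, hk, hm⟩ := Quiver.Path.exists_eq_comp_of_comp_eq_comp k₁ i₁ k₂ i₂ hi hl
  obtain ⟨m', hk', hm'⟩ := Quiver.Path.exists_eq_comp_of_comp_eq_comp k₁ j₁ k₂ j₂ hj hl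
  obtain rfl : m = m' := Quiver.Path.comp_injective_right (V := V) k₁ (hk ▸ hk')
  exact ⟨m, hm, hm'⟩

/-- In the category freely generated by a finite acyclic directed graph
(a path category of a finite quiver with no nontrivial directed cycles), any two maximal spans
for a given span coincide. -/
theorem statement17 {V : Type u} [Quiver.{v + 1} V] [Fintype V]
    [∀ a b : V, Fintype (a ⟶ b)]
    (acyclic : ∀ (a : V) (p : Quiver.Path a a), p = Quiver.Path.nil)
    {d a b : Paths V} (i : d ⟶ a) (j : d ⟶ b)
    {e₁ e₂ : Paths V} (i₁ : e₁ ⟶ a) (j₁ : e₁ ⟶ b) (i₂ : e₂ ⟶ a) (j₂ : e₂ ⟶ b)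
    (h₁ : IsMaxSpanFor i j i₁ j₁) (h₂ : IsMaxSpanFor i j i₂ j₂) :
    e₁ = e₂ ∧ HEq i₁ i₂ ∧ HEq j₁ j₂ := by
  obtain ⟨max₁, k₁, hi₁, hj₁⟩ := h₁
  obtain ⟨max₂, k₂, hi₂, hj₂⟩ := h₂
  have hi : k₁ ≫ i₁ = k₂ ≫ i₂ := hi₁.symm.trans hi₂
  have hj : k₁ ≫ j₁ = k₂ ≫ j₂ := hj₁.symm.trans hj₂
  rcases le_total (Quiver.Path.length (V := V) k₁) (Quiver.Path.length (V := V) k₂) with hl | hl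
  · obtain ⟨m, hm_i, hm_j⟩ := Paths.exists_common_factor_of_comp_eq_comp hi hj hl
    exact max₁.eq_of_factor m hm_i hm_j
  · obtain ⟨m, hm_i, hm_j⟩ := Paths.exists_common_factor_of_comp_eq_comp hi.symm hj.symm hl
    obtain ⟨he, hi', hj'⟩ := max₂.eq_of_factor m hm_i hm_j
    exact ⟨he.symm, hi'.symm, hj'.symm⟩
end

section
/- Let C be a small category such that every nonempty subset of objects has a minimal element with respect to the relation c < c' iff there is a non-identity morphism c → c' (C is well-founded), and suppose C is isomorphic to its opposite category. Then for every span (i, j) in C there exists a maximal span for (i, j). -/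
open CategoryTheory

universe v u

section Spans

variable {C : Type u} [Category.{v} C]

/-- `ltRel c c'` holds iff there exists a non-identity morphism `c ⟶ c'`. -/
def ltRel (c c' : C) : Prop :=
  ∃ f : c ⟶ c', ¬∃ h : c = c', f = eqToHom h

/-- A category is well-founded if every nonempty set of objects has a minimal element with
respect to the relation `ltRel` (existence of a non-identity morphism). -/
def WellFoundedCat (C : Type u) [Category.{v} C] : Prop :=
  ∀ S : Set C, S.Nonempty → ∃ c ∈ S, ∀ c' ∈ S, ¬ ltRel c' c

end Spans

section Aux

variable {C : Type u} [Category.{v} C]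

lemma obj_inj (σ : C ⥤ Cᵒᵖ) (τ : Cᵒᵖ ⥤ C) (hστ : σ ⋙ τ = 𝟭 C)
    {x y : C} (h : σ.obj x = σ.obj y) : x = y := by
  have hx := Functor.congr_obj hστ x
  have hy := Functor.congr_obj hστ y
  simp only [Functor.comp_obj, Functor.id_obj] at hx hy
  rw [← hx, ← hy, h]

lemma ltRel_dual (σ : C ⥤ Cᵒᵖ) (τ : Cᵒᵖ ⥤ C) (hστ : σ ⋙ τ = 𝟭 C)
    {x y : C} (h : ltRel x y) : ltRel (σ.obj y).unop (σ.obj x).unop := by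
  obtain ⟨f, hf⟩ := h
  refine ⟨(σ.map f).unop, ?_⟩
  rintro ⟨he, hg⟩
  apply hf
  have h2 : σ.obj x = σ.obj y := (congrArg Opposite.op he).symm
  have hxy : x = y := obj_inj σ τ hστ h2
  subst hxy
  refine ⟨rfl, ?_⟩
  have hσf : σ.map f = 𝟙 (σ.obj x) := by
    have : (σ.map f).unop = 𝟙 ((σ.obj x).unop) := by
      rw [hg]; simp
    calc σ.map f = ((σ.map f).unop).op := rfl
    _ = (𝟙 ((σ.obj x).unop)).op := by rw [this]
    _ = 𝟙 (σ.obj x) := rfl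
  have hc := Functor.congr_hom hστ f
  rw [Functor.comp_map, hσf, τ.map_id, Functor.id_map] at hc
  rw [eq_comm, eqToHom_comp_iff, comp_eqToHom_iff] at hc
  simpa using hc

end Aux

/-- Let `C` be a small well-founded category equipped with a dual structure
(an isomorphism of categories `C ≅ Cᵒᵖ`). Then every span in `C` admits a maximal span:
for every `i : d ⟶ a`, `j : d ⟶ b` there are `k : d ⟶ d'` and a maximal span `(ĩ, j̃)`
with `i = k ≫ ĩ` and `j = k ≫ j̃`. -/
theorem statement18 {C : Type u} [SmallCategory C]
    (hwf : WellFoundedCat C)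
    (hdual : ∃ (σ : C ⥤ Cᵒᵖ) (τ : Cᵒᵖ ⥤ C), σ ⋙ τ = 𝟭 C ∧ τ ⋙ σ = 𝟭 Cᵒᵖ)
    {d a b : C} (i : d ⟶ a) (j : d ⟶ b) :
    ∃ (d' : C) (k : d ⟶ d') (ti : d' ⟶ a) (tj : d' ⟶ b),
      i = k ≫ ti ∧ j = k ≫ tj ∧ IsMaxSpan ti tj := by
  obtain ⟨σ, τ, hστ, hτσ⟩ := hdual
  set T : Set C := {e | ∃ k : d ⟶ e, ∃ ti : e ⟶ a, ∃ tj : e ⟶ b,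
    i = k ≫ ti ∧ j = k ≫ tj} with hT
  -- φ c = τ.obj (op c), ψ c = (σ.obj c).unop are inverse bijections
  have hφψ : ∀ c : C, τ.obj (Opposite.op ((σ.obj c).unop)) = c := by
    intro c
    have := Functor.congr_obj hστ c
    simpa using this
  have hψφ : ∀ c : C, (σ.obj (τ.obj (Opposite.op c))).unop = c := by
    intro c
    have := Functor.congr_obj hτσ (Opposite.op c)
    simp only [Functor.comp_obj, Functor.id_obj] at this
    rw [this]
  set U : Set C := {c | τ.obj (Opposite.op c) ∈ T} with hU
  have hUne : U.Nonempty := by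
    refine ⟨(σ.obj d).unop, ?_⟩
    simp only [hU, Set.mem_setOf_eq, hφψ d]
    exact ⟨𝟙 d, i, j, by simp, by simp⟩
  obtain ⟨c₀, hc₀U, hc₀min⟩ := hwf U hUne
  set d' : C := τ.obj (Opposite.op c₀) with hd'
  have hd'T : d' ∈ T := hc₀U
  -- d' is maximal in T
  have hmax : ∀ e ∈ T, ¬ ltRel d' e := by
    intro e heT hlt
    have h1 : ltRel (σ.obj e).unop (σ.obj d').unop := ltRel_dual σ τ hστ hlt
    have h2 : (σ.obj d').unop = c₀ := hψφ c₀
    have h3 : (σ.obj e).unop ∈ U := by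
      simp only [hU, Set.mem_setOf_eq, hφψ e]
      exact heT
    exact hc₀min _ h3 (h2 ▸ h1)
  obtain ⟨k, ti, tj, hi, hj⟩ := hd'T
  refine ⟨d', k, ti, tj, hi, hj, ?_⟩
  intro e k' i' j' hi' hj'
  have heT : e ∈ T := ⟨k ≫ k', i', j', by rw [hi, hi', Category.assoc],
    by rw [hj, hj', Category.assoc]⟩
  have hk : ∃ h : d' = e, k' = eqToHom h := by
    by_contra hcon
    exact hmax e heT ⟨k', hcon⟩
  obtain ⟨h, hk'⟩ := hk
  exact ⟨h.symm, by simpa using hk'⟩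
end
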